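/- arXiv:1602.01484 — 3 statements merged into one kernel-verified Lean document; each statement's English description precedes it below -/
import Mathlib

section
/- The following elliptic integral identity holds: ∫₀¹ (1 - u)·Π(u², u²) du = 1, where Π(n, m) = ∫₀^{π/2} dσ / ((1 - n sin²σ)·√(1 - m sin²σ)) is the complete elliptic integral of the third kind. -/
/-!
Expanding `Π(u², u²)` as an integral over `σ` and swapping the two integrals (the integrand is
nonnegative, so Tonelli applies), the inner integral is elementary: with `s = sin σ`,
`(u - s⁻²) / √(1 - s²u²)` is an antiderivative of `(1 - u) (1 - s²u²)^(-3/2)`, whence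
`∫₀¹ (1 - u) (1 - s²u²)^(-3/2) du = (1 - cos σ) / sin² σ = 1 / (1 + cos σ)`.
Finally `tan (σ / 2)` is an antiderivative of `1 / (1 + cos σ)`, and `tan (π / 4) = 1`.
-/

open MeasureTheory Set Real Function

theorem intervalIntegrable_of_hasDerivAt_of_nonneg {g g' : ℝ → ℝ} {a b : ℝ} (hab : a ≤ b)
    (hderiv : ∀ x ∈ Icc a b, HasDerivAt g (g' x) x) (hpos : ∀ x ∈ Ioo a b, 0 ≤ g' x) :
    IntervalIntegrable g' volume a b :=
  (intervalIntegrable_iff_integrableOn_Ioc_of_le hab).2 <|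
    intervalIntegral.integrableOn_deriv_of_nonneg (HasDerivAt.continuousOn hderiv)
      (fun x hx ↦ hderiv x (Ioo_subset_Icc_self hx)) hpos

theorem integral_eq_sub_of_hasDerivAt_of_nonneg {g g' : ℝ → ℝ} {a b : ℝ} (hab : a ≤ b)
    (hderiv : ∀ x ∈ Icc a b, HasDerivAt g (g' x) x) (hpos : ∀ x ∈ Ioo a b, 0 ≤ g' x) :
    ∫ x in a..b, g' x = g b - g a :=
  intervalIntegral.integral_eq_sub_of_hasDerivAt (by rwa [uIcc_of_le hab])
    (intervalIntegrable_of_hasDerivAt_of_nonneg hab hderiv hpos)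

theorem intervalIntegral_integral_swap_of_nonneg {f : ℝ → ℝ → ℝ} {g : ℝ → ℝ} {a b c d : ℝ}
    (hab : a ≤ b) (hcd : c ≤ d) (hf : Measurable (uncurry f))
    (hf_nonneg : ∀ x ∈ Ioc a b, ∀ y ∈ Ioo c d, 0 ≤ f x y)
    (hf_int : ∀ y ∈ Ioo c d, IntervalIntegrable (f · y) volume a b)
    (hfg : ∀ y ∈ Ioo c d, ∫ x in a..b, f x y = g y)
    (hg : IntervalIntegrable g volume c d) :
    ∫ x in a..b, ∫ y in c..d, f x y = ∫ y in c..d, g y := by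
  have hg' : IntegrableOn g (Ioo c d) := hg.1.mono_set Ioo_subset_Ioc_self
  have hnorm : ∀ y ∈ Ioo c d, ∫ x in Ioc a b, ‖f x y‖ = g y := fun y hy ↦ by
    rw [← hfg y hy, intervalIntegral.integral_of_le hab]
    refine setIntegral_congr_fun measurableSet_Ioc fun x hx ↦ ?_
    exact norm_of_nonneg (hf_nonneg x hx y hy)
  have hprod : Integrable (uncurry f)
      ((volume.restrict (Ioc a b)).prod (volume.restrict (Ioo c d))) := by
    refine (integrable_prod_iff' hf.aestronglyMeasurable).2 ⟨?_, ?_⟩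
    · filter_upwards [ae_restrict_mem measurableSet_Ioo] with y hy
      exact (hf_int y hy).1
    · refine hg'.congr ?_
      filter_upwards [ae_restrict_mem measurableSet_Ioo] with y hy
      exact (hnorm y hy).symm
  simp only [intervalIntegral.integral_of_le hab, intervalIntegral.integral_of_le hcd,
    integral_Ioc_eq_integral_Ioo (x := c)]
  rw [integral_integral_swap hprod]
  refine setIntegral_congr_fun measurableSet_Ioo fun y hy ↦ ?_
  rw [← hfg y hy, intervalIntegral.integral_of_le hab]

theorem Real.hasDerivAt_tan_div_two {x : ℝ} (hx : cos (x / 2) ≠ 0) :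
    HasDerivAt (fun x ↦ tan (x / 2)) (1 + cos x)⁻¹ x := by
  have hcos : 1 + cos x = 2 * cos (x / 2) ^ 2 := by
    rw [cos_sq, mul_div_cancel₀ x two_ne_zero]; ring
  refine ((hasDerivAt_tan hx).comp x ((hasDerivAt_id x).div_const 2)).congr_deriv ?_
  rw [hcos]
  field_simp

theorem intervalIntegrable_and_integral_inv_one_add_cos :
    IntervalIntegrable (fun σ ↦ (1 + cos σ)⁻¹) volume 0 (π / 2) ∧
      ∫ σ in 0..(π / 2), (1 + cos σ)⁻¹ = 1 := by
  have hderiv : ∀ σ ∈ Icc 0 (π / 2), HasDerivAt (fun x ↦ tan (x / 2)) (1 + cos σ)⁻¹ σ :=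
    fun σ hσ ↦ hasDerivAt_tan_div_two <| (cos_pos_of_mem_Ioo
      ⟨by linarith [pi_pos, hσ.1], by linarith [pi_pos, hσ.2]⟩).ne'
  have hpos : ∀ σ ∈ Ioo 0 (π / 2), 0 ≤ (1 + cos σ)⁻¹ := fun σ _ ↦
    inv_nonneg.2 (by linarith [neg_one_le_cos σ])
  have hπ : 0 ≤ π / 2 := by positivity
  refine ⟨intervalIntegrable_of_hasDerivAt_of_nonneg hπ hderiv hpos, ?_⟩
  rw [integral_eq_sub_of_hasDerivAt_of_nonneg hπ hderiv hpos, div_div,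
    show 2 * 2 = (4 : ℝ) by norm_num]
  simp

/-- `(1 - u) (1 - u² s²) ^ (-3 / 2)`, the integrand of `(1 - u) Π(u², u²)` at `s = sin σ`. -/
noncomputable def piIntegrand (u s : ℝ) : ℝ :=
  (1 - u) * (1 / ((1 - u ^ 2 * s ^ 2) * √(1 - u ^ 2 * s ^ 2)))

theorem piIntegrand_nonneg {u s : ℝ} (hu : u ≤ 1) (hus : u ^ 2 * s ^ 2 ≤ 1) :
    0 ≤ piIntegrand u s := by
  have : 0 ≤ 1 - u ^ 2 * s ^ 2 := by linarith
  have : 0 ≤ 1 - u := by linarith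
  unfold piIntegrand
  positivity

theorem hasDerivAt_piIntegrand_antideriv {u s : ℝ} (hs : s ≠ 0) (hus : u ^ 2 * s ^ 2 < 1) :
    HasDerivAt (fun u ↦ (u - (s ^ 2)⁻¹) / √(1 - u ^ 2 * s ^ 2)) (piIntegrand u s) u := by
  have hpos : 0 < 1 - u ^ 2 * s ^ 2 := by linarith
  have hq : √(1 - u ^ 2 * s ^ 2) ^ 2 = 1 - u ^ 2 * s ^ 2 := sq_sqrt hpos.le
  have hsqrt : HasDerivAt (fun u ↦ √(1 - u ^ 2 * s ^ 2))
      (-(2 * u * s ^ 2) / (2 * √(1 - u ^ 2 * s ^ 2))) u := by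
    refine HasDerivAt.sqrt ?_ hpos.ne'
    simpa using ((hasDerivAt_pow 2 u).mul_const (s ^ 2)).const_sub 1
  refine (((hasDerivAt_id' u).sub_const _).div hsqrt (sqrt_pos.2 hpos).ne').congr_deriv ?_
  unfold piIntegrand
  field_simp
  rw [hq]
  ring

theorem intervalIntegrable_and_integral_piIntegrand {s c : ℝ} (hs : s ≠ 0) (hc : 0 < c)
    (hsc : s ^ 2 + c ^ 2 = 1) :
    IntervalIntegrable (piIntegrand · s) volume 0 1 ∧
      ∫ u in 0..1, piIntegrand u s = (1 + c)⁻¹ := by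
  have hus : ∀ u ∈ Icc (0 : ℝ) 1, u ^ 2 * s ^ 2 < 1 := fun u hu ↦ by
    have : u ^ 2 ≤ 1 := by nlinarith [hu.1, hu.2]
    nlinarith [sq_nonneg s]
  have hderiv := fun u hu ↦ hasDerivAt_piIntegrand_antideriv hs (hus u hu)
  have hpos : ∀ u ∈ Ioo (0 : ℝ) 1, 0 ≤ piIntegrand u s := fun u hu ↦
    piIntegrand_nonneg hu.2.le (hus u (Ioo_subset_Icc_self hu)).le
  refine ⟨intervalIntegrable_of_hasDerivAt_of_nonneg zero_le_one hderiv hpos, ?_⟩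
  have hsqrt : √(1 - 1 ^ 2 * s ^ 2) = c := by
    rw [one_pow, one_mul, ← sqrt_sq hc.le]
    congr 1
    linarith
  have hsqrt0 : √(1 - 0 ^ 2 * s ^ 2) = 1 := by simp
  rw [integral_eq_sub_of_hasDerivAt_of_nonneg zero_le_one hderiv hpos, hsqrt, hsqrt0]
  field_simp
  linear_combination hsc

/-- `∫₀¹ (1-u) Π(u²,u²) du = 1`, where `Π` is the complete elliptic integral
of the third kind. -/
theorem stmt3 (Pi' : ℝ → ℝ → ℝ)
    (hPi : ∀ n m : ℝ, Pi' n m = ∫ σ in (0:ℝ)..(Real.pi / 2),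
      1 / ((1 - n * Real.sin σ ^ 2) * Real.sqrt (1 - m * Real.sin σ ^ 2))) :
    ∫ u in (0:ℝ)..1, (1 - u) * Pi' (u ^ 2) (u ^ 2) = 1 := by
  have hsin_cos : ∀ σ ∈ Ioo 0 (π / 2), sin σ ≠ 0 ∧ 0 < cos σ := fun σ hσ ↦
    ⟨(sin_pos_of_pos_of_lt_pi hσ.1 (by linarith [hσ.2, pi_pos])).ne',
      cos_pos_of_mem_Ioo ⟨by linarith [hσ.1, pi_pos], hσ.2⟩⟩
  have hinner (σ : ℝ) (hσ : σ ∈ Ioo 0 (π / 2)) :=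
    intervalIntegrable_and_integral_piIntegrand (hsin_cos σ hσ).1 (hsin_cos σ hσ).2
      (sin_sq_add_cos_sq σ)
  calc ∫ u in (0:ℝ)..1, (1 - u) * Pi' (u ^ 2) (u ^ 2)
      = ∫ u in (0:ℝ)..1, ∫ σ in (0:ℝ)..(π / 2), piIntegrand u (sin σ) := by
        refine intervalIntegral.integral_congr fun u _ ↦ ?_
        rw [hPi, ← intervalIntegral.integral_const_mul]
        rfl
    _ = ∫ σ in (0:ℝ)..(π / 2), (1 + cos σ)⁻¹ :=
        intervalIntegral_integral_swap_of_nonneg zero_le_one (by positivity)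
          (by unfold piIntegrand; fun_prop)
          (fun u hu σ _ ↦ piIntegrand_nonneg hu.2 (by nlinarith [hu.1, hu.2, sin_sq_le_one σ]))
          (fun σ hσ ↦ (hinner σ hσ).1) (fun σ hσ ↦ (hinner σ hσ).2)
          intervalIntegrable_and_integral_inv_one_add_cos.1
    _ = 1 := intervalIntegrable_and_integral_inv_one_add_cos.2
end

section
/- For 0 < a, b with a² + b² = 1 and a,b ≠ 0, the integral (1/(2π))∫₀^{2π}∫₀^{π/2} sin³(σ)cos(σ)/(1 - cos⁴(σ)sin²(2θ))^{3/2} dσ dθ, multiplied by 1/(ab), equals 1/(π a b). Equivalently, ∫₀^{2π}∫₀^{π/2} sin³(σ)cos(σ)/(1 - cos⁴(σ)sin²(2θ))^{3/2} dσ dθ = 2. -/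
/-!
With `c = cos² σ` and `k = sin² 2θ` the inner integral becomes
`∫₀¹ (1 - c) / (2 (1 - k c²)^{3/2}) dc`, whose integrand has the elementary primitive
`-(1/k - c) / (2 √(1 - k c²))`. So for `0 < k < 1`, i.e. unless `sin 4θ = 0`, the inner integral
equals `1 / (2 (1 + |cos 2θ|))`. This function of `θ` has period `π/2`, is symmetric about `π/4`
and equals `1 / (4 cos² θ)` on `[0, π/4]`, so its integral over `[0, 2π]` is `8 · tan(π/4) / 4 = 2`.
-/

open Real intervalIntegral MeasureTheory

lemma rpow_three_halves {x : ℝ} (hx : 0 ≤ x) : x ^ ((3:ℝ)/2) = x * √x := by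
  rw [show (3:ℝ)/2 = 1 + 1/2 by norm_num, rpow_add' hx (by norm_num), rpow_one, sqrt_eq_rpow]

lemma one_sub_cos_pow_four_mul_pos {k : ℝ} (hk : k < 1) (σ : ℝ) : 0 < 1 - cos σ ^ 4 * k := by
  have hc : cos σ ^ 4 ≤ 1 := by nlinarith [cos_sq_le_one σ, sq_nonneg (cos σ)]
  rcases le_or_gt k 0 with hk0 | hk0
  · nlinarith [pow_nonneg (sq_nonneg (cos σ)) 2]
  · nlinarith

lemma hasDerivAt_primitive_sin_pow_three_mul_cos_div_rpow {k σ : ℝ} (hk : k ≠ 0)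
    (hD : 0 < 1 - cos σ ^ 4 * k) :
    HasDerivAt (fun x => (1/k - cos x ^ 2) / (2 * √(1 - cos x ^ 4 * k)))
      (sin σ ^ 3 * cos σ / (1 - cos σ ^ 4 * k) ^ ((3:ℝ)/2)) σ := by
  have hsqrt : √(1 - cos σ ^ 4 * k) ^ 2 = 1 - cos σ ^ 4 * k := sq_sqrt hD.le
  have hD' : HasDerivAt (fun x => 1 - cos x ^ 4 * k) (-(4 * cos σ ^ 3 * (-sin σ) * k)) σ := by
    simpa using (((hasDerivAt_cos σ).pow 4).mul_const k).const_sub 1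
  have hN : HasDerivAt (fun x => 1/k - cos x ^ 2) (-(2 * cos σ * (-sin σ))) σ := by
    simpa using ((hasDerivAt_cos σ).pow 2).const_sub (1/k)
  refine (hN.div ((hD'.sqrt hD.ne').const_mul 2) (by positivity)).congr_deriv ?_
  rw [rpow_three_halves hD.le]
  have hsqrt_pos : 0 < √(1 - cos σ ^ 4 * k) := sqrt_pos.2 hD
  field_simp
  linear_combination (4 * cos σ * sin σ * (1 - sin σ ^ 2 - cos σ ^ 4 * k)) * hsqrt
    - (4 * cos σ * sin σ * (1 - cos σ ^ 4 * k)) * sin_sq_add_cos_sq σ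

lemma integral_sin_pow_three_mul_cos_div_rpow {k : ℝ} (hk1 : k < 1) (hk0 : k ≠ 0) :
    ∫ σ in (0:ℝ)..(π / 2), sin σ ^ 3 * cos σ / (1 - cos σ ^ 4 * k) ^ ((3:ℝ)/2)
      = 1 / (2 * (1 + √(1 - k))) := by
  have hD := one_sub_cos_pow_four_mul_pos hk1
  have hcont : Continuous fun σ => sin σ ^ 3 * cos σ / (1 - cos σ ^ 4 * k) ^ ((3:ℝ)/2) :=
    .div (by fun_prop) (.rpow_const (by fun_prop) fun σ => .inl (hD σ).ne')
      fun σ => (rpow_pos_of_pos (hD σ) _).ne'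
  rw [integral_eq_sub_of_hasDerivAt
    (fun σ _ => hasDerivAt_primitive_sin_pow_three_mul_cos_div_rpow hk0 (hD σ))
    (hcont.intervalIntegrable _ _)]
  have hs : √(1 - k) ^ 2 = 1 - k := sq_sqrt (by linarith)
  have hs_pos : 0 < √(1 - k) := sqrt_pos.2 (by linarith)
  simp only [cos_pi_div_two, cos_zero, one_pow, mul_one, ne_eq, OfNat.ofNat_ne_zero,
    not_false_eq_true, zero_pow, zero_mul, sub_zero, sqrt_one]
  field_simp
  linear_combination hs

lemma ae_sin_four_mul_ne_zero : ∀ᵐ θ : ℝ, sin (4 * θ) ≠ 0 := by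
  have hzeros : {θ : ℝ | sin (4 * θ) = 0} ⊆ Set.range (fun n : ℤ => n * π / 4) := by
    intro θ hθ
    obtain ⟨n, hn⟩ := sin_eq_zero_iff.1 hθ
    exact ⟨n, by linarith⟩
  exact ((Set.countable_range _).mono hzeros).ae_notMem volume

noncomputable def innerIntegral (θ : ℝ) : ℝ := 1 / (2 * (1 + |cos (2 * θ)|))

lemma integral_eq_innerIntegral {θ : ℝ} (hθ : sin (4 * θ) ≠ 0) :
    ∫ σ in (0:ℝ)..(π / 2), sin σ ^ 3 * cos σ / (1 - cos σ ^ 4 * sin (2 * θ) ^ 2) ^ ((3:ℝ)/2)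
      = innerIntegral θ := by
  have hsin4 : sin (4 * θ) = 2 * sin (2 * θ) * cos (2 * θ) := by
    rw [← sin_two_mul]; ring_nf
  obtain ⟨hsin, hcos⟩ : sin (2 * θ) ≠ 0 ∧ cos (2 * θ) ≠ 0 := by simpa [hsin4] using hθ
  have hlt : sin (2 * θ) ^ 2 < 1 := by
    nlinarith [sin_sq_add_cos_sq (2 * θ), pow_pos (abs_pos.2 hcos) 2, sq_abs (cos (2 * θ))]
  rw [integral_sin_pow_three_mul_cos_div_rpow hlt (pow_ne_zero 2 hsin), innerIntegral,
    ← cos_sq', sqrt_sq_eq_abs]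

lemma continuous_innerIntegral : Continuous innerIntegral :=
  continuous_const.div (by fun_prop) fun θ => by positivity

lemma innerIntegral_periodic : Function.Periodic innerIntegral (π / 2) := by
  intro θ
  rw [innerIntegral, innerIntegral, show 2 * (θ + π / 2) = 2 * θ + π by ring, cos_add_pi, abs_neg]

lemma innerIntegral_pi_div_two_sub (θ : ℝ) : innerIntegral (π / 2 - θ) = innerIntegral θ := by
  rw [innerIntegral, innerIntegral, show 2 * (π / 2 - θ) = π - 2 * θ by ring, cos_pi_sub, abs_neg]

lemma integral_innerIntegral_zero_pi_div_four :
    ∫ θ in (0:ℝ)..(π / 4), innerIntegral θ = 1 / 4 := by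
  have hcos_pos : ∀ θ ∈ Set.uIcc 0 (π / 4), 0 < cos θ := fun θ hθ => by
    rw [Set.uIcc_of_le (by positivity)] at hθ
    exact cos_pos_of_mem_Ioo ⟨by linarith [hθ.1, pi_pos], by linarith [hθ.2, pi_pos]⟩
  have hcongr : ∀ θ ∈ Set.uIcc 0 (π / 4), innerIntegral θ = 1 / (4 * cos θ ^ 2) := fun θ hθ => by
    have hcos2 : 0 ≤ cos (2 * θ) := by
      rw [Set.uIcc_of_le (by positivity)] at hθ
      exact cos_nonneg_of_mem_Icc ⟨by linarith [hθ.1, pi_pos], by linarith [hθ.2]⟩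
    rw [innerIntegral, abs_of_nonneg hcos2, cos_two_mul]
    ring
  have htan : ∀ θ ∈ Set.uIcc 0 (π / 4),
      HasDerivAt (fun x => tan x / 4) (1 / (4 * cos θ ^ 2)) θ :=
    fun θ hθ => ((hasDerivAt_tan (hcos_pos θ hθ).ne').div_const 4).congr_deriv (by ring)
  have hint : IntervalIntegrable (fun θ => 1 / (4 * cos θ ^ 2)) volume 0 (π / 4) :=
    (continuousOn_const.div (by fun_prop) fun θ hθ => (by
      have := hcos_pos θ hθ; positivity)).intervalIntegrable
  rw [integral_congr hcongr, integral_eq_sub_of_hasDerivAt htan hint, tan_pi_div_four, tan_zero]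
  norm_num

lemma integral_innerIntegral_zero_two_pi : ∫ θ in (0:ℝ)..(2 * π), innerIntegral θ = 2 := by
  have hint (t₁ t₂ : ℝ) : IntervalIntegrable innerIntegral volume t₁ t₂ :=
    continuous_innerIntegral.intervalIntegrable t₁ t₂
  have hhalf : ∫ θ in (0:ℝ)..(π / 2), innerIntegral θ = 1 / 2 := by
    have hsymm : ∫ θ in (π / 4)..(π / 2), innerIntegral θ
        = ∫ θ in (0:ℝ)..(π / 4), innerIntegral θ := by
      have := integral_comp_sub_left (a := 0) (b := π / 4) innerIntegral (π / 2)
      simp only [innerIntegral_pi_div_two_sub, sub_zero] at this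
      rw [this, show π / 2 - π / 4 = π / 4 by ring]
    rw [← integral_add_adjacent_intervals (hint 0 (π / 4)) (hint (π / 4) (π / 2)), hsymm,
      integral_innerIntegral_zero_pi_div_four]
    norm_num
  calc ∫ θ in (0:ℝ)..(2 * π), innerIntegral θ
      = ∫ θ in (0:ℝ)..(0 + (4:ℤ) • (π / 2)), innerIntegral θ := by
        rw [zero_add, zsmul_eq_mul]; push_cast; ring_nf
    _ = (4:ℤ) • ∫ θ in (0:ℝ)..(0 + π / 2), innerIntegral θ :=
        innerIntegral_periodic.intervalIntegral_add_zsmul_eq 4 0 hint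
    _ = 2 := by rw [zero_add, hhalf]; norm_num

theorem stmt5_general (a b : ℝ) :
    (1 / (2 * Real.pi)) * (1 / (a * b)) *
        (∫ θ in (0:ℝ)..(2 * Real.pi), ∫ σ in (0:ℝ)..(Real.pi / 2),
          Real.sin σ ^ 3 * Real.cos σ /
            (1 - Real.cos σ ^ 4 * Real.sin (2 * θ) ^ 2) ^ ((3:ℝ)/2))
        = 1 / (Real.pi * a * b) ∧
      (∫ θ in (0:ℝ)..(2 * Real.pi), ∫ σ in (0:ℝ)..(Real.pi / 2),
          Real.sin σ ^ 3 * Real.cos σ /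
            (1 - Real.cos σ ^ 4 * Real.sin (2 * θ) ^ 2) ^ ((3:ℝ)/2)) = 2 := by
  have hdouble : (∫ θ in (0:ℝ)..(2 * π), ∫ σ in (0:ℝ)..(π / 2),
      sin σ ^ 3 * cos σ / (1 - cos σ ^ 4 * sin (2 * θ) ^ 2) ^ ((3:ℝ)/2)) = 2 := by
    refine (intervalIntegral.integral_congr_ae ?_).trans integral_innerIntegral_zero_two_pi
    filter_upwards [ae_sin_four_mul_ne_zero] with θ hθ _ using integral_eq_innerIntegral hθ
  refine ⟨?_, hdouble⟩
  rw [hdouble]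
  field_simp [pi_ne_zero]

theorem stmt5 (a b : ℝ) (ha : 0 < a) (hb : 0 < b) (hab : a ^ 2 + b ^ 2 = 1) :
    (1 / (2 * Real.pi)) * (1 / (a * b)) *
        (∫ θ in (0:ℝ)..(2 * Real.pi), ∫ σ in (0:ℝ)..(Real.pi / 2),
          Real.sin σ ^ 3 * Real.cos σ /
            (1 - Real.cos σ ^ 4 * Real.sin (2 * θ) ^ 2) ^ ((3:ℝ)/2))
        = 1 / (Real.pi * a * b) ∧
      (∫ θ in (0:ℝ)..(2 * Real.pi), ∫ σ in (0:ℝ)..(Real.pi / 2),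
          Real.sin σ ^ 3 * Real.cos σ /
            (1 - Real.cos σ ^ 4 * Real.sin (2 * θ) ^ 2) ^ ((3:ℝ)/2)) = 2 :=
  stmt5_general a b
end

section
/- Let v = (v₁,v₂,v₃,v₄) range over ℝ⁴ with Gaussian weight e^{-‖v‖²/2}. Then (1/(2π)²)·∫_{ℝ⁴} (‖v‖²·|v₄| / (‖v‖² - v₃²)^{3/2})·e^{-‖v‖²/2} dv = 1. -/
/-!
Integrating out `v₃` against `e^{-v₃²/2}` turns `‖v‖²` into `S + 1`, where `S = v₁² + v₂² + v₄²`,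
so the integral becomes `∫_{ℝ³} |v₄| φ(S)` with `φ(s) = √(2π) (s + 1) s^{-3/2} e^{-s/2}`
(`radialProfile`).
In cylindrical coordinates (polar coordinates in `(v₁, v₂)`, then `u = v₄²`) this is
`π ∫_{t, u > 0} φ(t + u) = π ∫_0^∞ s φ(s) ds`, and
`∫_0^∞ (s^{1/2} + s^{-1/2}) e^{-s/2} ds = 2^{3/2} Γ(3/2) + 2^{1/2} Γ(1/2) = 2 √(2π)`.
Altogether the integral equals `π · √(2π) · 2 √(2π) = (2π)²`.
-/

open MeasureTheory Real Set
open scoped ENNReal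

theorem lintegral_eq_two_mul_setLIntegral_Ioi_of_even {g : ℝ → ℝ≥0∞} (hg : ∀ x, g (-x) = g x) :
    ∫⁻ x, g x = 2 * ∫⁻ x in Ioi 0, g x := by
  have hIic : ∫⁻ x in Iic 0, g x = ∫⁻ x in Ioi 0, g x := by
    rw [← (Measure.measurePreserving_neg volume).setLIntegral_comp_preimage_emb
      (Homeomorph.neg ℝ).measurableEmbedding, neg_preimage, neg_Iic, neg_zero,
      setLIntegral_congr Ioi_ae_eq_Ici.symm]
    simp only [hg]
  rw [← lintegral_add_compl g measurableSet_Ioi, compl_Ioi, hIic, two_mul]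

theorem setLIntegral_Ioi_comp_sq (f : ℝ → ℝ≥0∞) :
    ∫⁻ x in Ioi 0, ENNReal.ofReal (2 * x) * f (x ^ 2) = ∫⁻ u in Ioi 0, f u := by
  have himage : (fun x : ℝ => x ^ 2) '' Ioi 0 = Ioi 0 := by
    ext u
    exact ⟨fun ⟨x, (hx : 0 < x), hxu⟩ => hxu ▸ pow_pos hx 2,
      fun hu => ⟨√u, sqrt_pos.2 hu, sq_sqrt (le_of_lt hu)⟩⟩
  conv_rhs => rw [← himage]
  rw [lintegral_image_eq_lintegral_abs_deriv_mul measurableSet_Ioi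
    (fun x _ => (hasDerivAt_pow 2 x).hasDerivWithinAt)
    ((pow_left_strictMonoOn₀ two_ne_zero).injOn.mono Ioi_subset_Ici_self)]
  refine setLIntegral_congr_fun measurableSet_Ioi fun x (hx : 0 < x) => ?_
  rw [abs_of_pos (by positivity)]
  norm_num

theorem lintegral_abs_mul_comp_sq (f : ℝ → ℝ≥0∞) :
    ∫⁻ x, ENNReal.ofReal |x| * f (x ^ 2) = ∫⁻ u in Ioi 0, f u := by
  rw [lintegral_eq_two_mul_setLIntegral_Ioi_of_even (by simp),
    ← lintegral_const_mul' _ _ (by simp), ← setLIntegral_Ioi_comp_sq f]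
  refine setLIntegral_congr_fun measurableSet_Ioi fun x (hx : 0 < x) => ?_
  rw [← mul_assoc, abs_of_pos hx, ENNReal.ofReal_mul zero_le_two, ENNReal.ofReal_ofNat]

theorem setLIntegral_Ioi_comp_const_add (f : ℝ → ℝ≥0∞) (t : ℝ) :
    ∫⁻ u in Ioi 0, f (t + u) = ∫⁻ s in Ioi t, f s := by
  rw [← (measurePreserving_add_left volume t).setLIntegral_comp_preimage_emb
    (measurableEmbedding_addLeft t) f (Ioi t), preimage_const_add_Ioi, sub_self]

theorem setLIntegral_Ioi_setLIntegral_Ioi_comp_add {f : ℝ → ℝ≥0∞} (hf : Measurable f) :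
    ∫⁻ t in Ioi 0, ∫⁻ u in Ioi 0, f (t + u) = ∫⁻ s in Ioi 0, ENNReal.ofReal s * f s := by
  calc ∫⁻ t in Ioi 0, ∫⁻ u in Ioi 0, f (t + u)
      = ∫⁻ t in Ioi 0, ∫⁻ s in Ioi 0, (Iio s).indicator (fun _ => f s) t := by
        refine setLIntegral_congr_fun measurableSet_Ioi fun t (ht : 0 < t) => ?_
        rw [setLIntegral_Ioi_comp_const_add, ← lintegral_indicator measurableSet_Ioi,
          ← lintegral_indicator measurableSet_Ioi]
        refine lintegral_congr fun s => ?_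
        by_cases hs : t < s
        · simp [indicator, hs, ht.trans hs]
        · simp [indicator, hs]
    _ = ∫⁻ s in Ioi 0, ∫⁻ t in Ioi 0, (Iio s).indicator (fun _ => f s) t :=
        lintegral_lintegral_swap <| Measurable.aemeasurable <|
          (hf.comp measurable_snd).indicator (measurableSet_lt measurable_fst measurable_snd)
    _ = ∫⁻ s in Ioi 0, ENNReal.ofReal s * f s := by
        refine setLIntegral_congr_fun measurableSet_Ioi fun s (hs : 0 < s) => ?_
        rw [lintegral_indicator_const measurableSet_Iio, Measure.restrict_apply measurableSet_Iio,
          Iio_inter_Ioi, Real.volume_Ioo, sub_zero, mul_comm]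

theorem lintegral_comp_sq_add_sq {f : ℝ → ℝ≥0∞} (hf : Measurable f) :
    ∫⁻ p : ℝ × ℝ, f (p.1 ^ 2 + p.2 ^ 2) = ENNReal.ofReal π * ∫⁻ t in Ioi 0, f t := by
  calc ∫⁻ p : ℝ × ℝ, f (p.1 ^ 2 + p.2 ^ 2)
      = ∫⁻ p in polarCoord.target, ENNReal.ofReal p.1 * f (p.1 ^ 2) := by
        rw [← lintegral_comp_polarCoord_symm]
        refine setLIntegral_congr_fun polarCoord.open_target.measurableSet fun p _ => ?_
        simp only [polarCoord_symm_apply, smul_eq_mul, mul_pow, ← mul_add, cos_sq_add_sin_sq,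
          mul_one]
    _ = ∫⁻ r in Ioi 0, ENNReal.ofReal (2 * π) * (ENNReal.ofReal r * f (r ^ 2)) := by
        rw [polarCoord_target, Measure.volume_eq_prod, setLIntegral_prod _ (by fun_prop)]
        refine lintegral_congr fun r => ?_
        dsimp only
        rw [setLIntegral_const, Real.volume_Ioo, mul_comm]
        ring_nf
    _ = ENNReal.ofReal π * ∫⁻ t in Ioi 0, f t := by
        rw [← setLIntegral_Ioi_comp_sq f, ← lintegral_const_mul' _ _ ENNReal.ofReal_ne_top]
        refine setLIntegral_congr_fun measurableSet_Ioi fun r (hr : 0 < r) => ?_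
        rw [← mul_assoc, ← mul_assoc, ← ENNReal.ofReal_mul (by positivity),
          ← ENNReal.ofReal_mul (by positivity)]
        ring_nf

theorem lintegral_lintegral_abs_mul_comp_sq_add_sq_add_sq {g : ℝ → ℝ≥0∞} (hg : Measurable g) :
    ∫⁻ p : ℝ × ℝ, ∫⁻ d, ENNReal.ofReal |d| * g (p.1 ^ 2 + p.2 ^ 2 + d ^ 2) =
      ENNReal.ofReal π * ∫⁻ s in Ioi 0, ENNReal.ofReal s * g s := by
  calc ∫⁻ p : ℝ × ℝ, ∫⁻ d, ENNReal.ofReal |d| * g (p.1 ^ 2 + p.2 ^ 2 + d ^ 2)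
      = ∫⁻ p : ℝ × ℝ, ∫⁻ u in Ioi 0, g (p.1 ^ 2 + p.2 ^ 2 + u) :=
        lintegral_congr fun p => lintegral_abs_mul_comp_sq fun u => g (p.1 ^ 2 + p.2 ^ 2 + u)
    _ = ENNReal.ofReal π * ∫⁻ t in Ioi 0, ∫⁻ u in Ioi 0, g (t + u) :=
        lintegral_comp_sq_add_sq (f := fun t => ∫⁻ u in Ioi 0, g (t + u)) (by fun_prop)
    _ = ENNReal.ofReal π * ∫⁻ s in Ioi 0, ENNReal.ofReal s * g s := by
        rw [setLIntegral_Ioi_setLIntegral_Ioi_comp_add hg]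

theorem lintegral_pi_eq_lintegral_insertNth {α : Type*} [MeasureSpace α]
    [SigmaFinite (volume : Measure α)] {n : ℕ} (i : Fin (n + 1))
    {f : (Fin (n + 1) → α) → ℝ≥0∞} (hf : Measurable f) :
    ∫⁻ x, f x = ∫⁻ y : Fin n → α, ∫⁻ c, f (i.insertNth c y) := by
  have e := (volume_preserving_piFinSuccAbove (fun _ : Fin (n + 1) => α) i).symm
  rw [← e.lintegral_comp_emb (MeasurableEquiv.measurableEmbedding _), Measure.volume_eq_prod]
  exact lintegral_prod_symm _ (hf.comp (MeasurableEquiv.measurable _)).aemeasurable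

theorem lintegral_euclideanSpace_fin_four {f : EuclideanSpace ℝ (Fin 4) → ℝ≥0∞}
    (hf : Measurable f) :
    ∫⁻ v, f v = ∫⁻ p : ℝ × ℝ, ∫⁻ d, ∫⁻ c, f !₂[p.1, p.2, c, d] := by
  rw [← (PiLp.volume_preserving_toLp (Fin 4)).lintegral_comp hf,
    lintegral_pi_eq_lintegral_insertNth 2 (by fun_prop),
    lintegral_pi_eq_lintegral_insertNth 2 (by fun_prop),
    ← (volume_preserving_finTwoArrow ℝ).symm.lintegral_comp (by fun_prop)]
  refine lintegral_congr fun p => lintegral_congr fun d => lintegral_congr fun c => ?_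
  congr 2
  ext i
  fin_cases i <;> rfl

theorem setLIntegral_Ioi_rpow_mul_exp_neg_half {a : ℝ} (ha : 0 < a) :
    ∫⁻ u in Ioi 0, ENNReal.ofReal (u ^ (a - 1) * exp (-u / 2)) =
      ENNReal.ofReal (2 ^ a * Gamma a) := by
  have hexp : ∀ u : ℝ, exp (-u / 2) = exp (-(1 / 2 * u)) := fun u => by ring_nf
  have hint : IntegrableOn (fun u : ℝ => u ^ (a - 1) * exp (-u / 2)) (Ioi 0) := by
    simpa [hexp, Real.rpow_one] using
      integrableOn_rpow_mul_exp_neg_mul_rpow (p := 1) (by linarith) one_pos (one_half_pos (α := ℝ))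
  rw [← ofReal_integral_eq_lintegral_ofReal hint
    ((ae_restrict_iff' measurableSet_Ioi).2 (.of_forall fun u (hu : 0 < u) => by positivity))]
  simp_rw [hexp]
  rw [integral_rpow_mul_exp_neg_mul_Ioi ha one_half_pos]
  norm_num

theorem two_rpow_one_half_mul_Gamma_one_half :
    (2 : ℝ) ^ (1 / 2 : ℝ) * Gamma (1 / 2) = √(2 * π) := by
  rw [Gamma_one_half_eq, ← sqrt_eq_rpow, sqrt_mul zero_le_two]

theorem two_rpow_three_halves_mul_Gamma_three_halves :
    (2 : ℝ) ^ (3 / 2 : ℝ) * Gamma (3 / 2) = √(2 * π) := by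
  rw [show (3 / 2 : ℝ) = 1 / 2 + 1 by norm_num, rpow_add two_pos, Gamma_add_one one_half_pos.ne',
    ← two_rpow_one_half_mul_Gamma_one_half]
  ring

theorem lintegral_exp_neg_sq_div_two :
    ∫⁻ x : ℝ, ENNReal.ofReal (exp (-x ^ 2 / 2)) = ENNReal.ofReal √(2 * π) := by
  have hexp : ∀ x : ℝ, exp (-x ^ 2 / 2) = exp (-(1 / 2) * x ^ 2) := fun x => by ring_nf
  simp_rw [hexp]
  rw [← ofReal_integral_eq_lintegral_ofReal (integrable_exp_neg_mul_sq one_half_pos)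
    (.of_forall fun x => (exp_pos _).le), integral_gaussian]
  congr 2
  ring

theorem lintegral_sq_mul_exp_neg_sq_div_two :
    ∫⁻ x : ℝ, ENNReal.ofReal (x ^ 2 * exp (-x ^ 2 / 2)) = ENNReal.ofReal √(2 * π) := by
  rw [← two_rpow_three_halves_mul_Gamma_three_halves,
    ← setLIntegral_Ioi_rpow_mul_exp_neg_half (by norm_num), ← lintegral_abs_mul_comp_sq]
  refine lintegral_congr fun x => ?_
  rw [← ENNReal.ofReal_mul (abs_nonneg x), show (3 / 2 : ℝ) - 1 = 1 / 2 by norm_num,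
    ← sqrt_eq_rpow, sqrt_sq_eq_abs, ← mul_assoc, abs_mul_abs_self, sq]

theorem lintegral_add_sq_mul_exp_neg_sq_div_two {S : ℝ} (hS : 0 ≤ S) :
    ∫⁻ c : ℝ, ENNReal.ofReal ((S + c ^ 2) * exp (-c ^ 2 / 2)) =
      ENNReal.ofReal (√(2 * π) * (S + 1)) := by
  have hsplit : ∀ c : ℝ, ENNReal.ofReal ((S + c ^ 2) * exp (-c ^ 2 / 2)) =
      ENNReal.ofReal S * ENNReal.ofReal (exp (-c ^ 2 / 2)) +
        ENNReal.ofReal (c ^ 2 * exp (-c ^ 2 / 2)) := fun c => by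
    rw [← ENNReal.ofReal_mul hS, ← ENNReal.ofReal_add (by positivity) (by positivity), add_mul]
  simp_rw [hsplit]
  rw [lintegral_add_left (by fun_prop), lintegral_const_mul _ (by fun_prop),
    lintegral_exp_neg_sq_div_two, lintegral_sq_mul_exp_neg_sq_div_two, ← ENNReal.ofReal_mul hS,
    ← ENNReal.ofReal_add (by positivity) (by positivity)]
  ring_nf

noncomputable def radialProfile (s : ℝ) : ℝ :=
  √(2 * π) * (s + 1) * exp (-s / 2) / s ^ (3 / 2 : ℝ)

theorem setLIntegral_Ioi_mul_radialProfile :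
    ∫⁻ s in Ioi 0, ENNReal.ofReal s * ENNReal.ofReal (radialProfile s) =
      ENNReal.ofReal (4 * π) := by
  have hsplit : ∀ s : ℝ, 0 < s → ENNReal.ofReal s * ENNReal.ofReal (radialProfile s) =
      ENNReal.ofReal √(2 * π) * (ENNReal.ofReal (s ^ (3 / 2 - 1 : ℝ) * exp (-s / 2)) +
        ENNReal.ofReal (s ^ (1 / 2 - 1 : ℝ) * exp (-s / 2))) := fun s hs => by
    have hr : 0 < s ^ (1 / 2 : ℝ) := by positivity
    have hr2 : (s ^ (1 / 2 : ℝ)) ^ 2 = s := by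
      rw [← rpow_natCast, ← rpow_mul hs.le]
      norm_num
    rw [radialProfile, ← ENNReal.ofReal_add (by positivity) (by positivity),
      ← ENNReal.ofReal_mul hs.le, ← ENNReal.ofReal_mul (by positivity),
      show (3 / 2 - 1 : ℝ) = 1 / 2 by norm_num, show (1 / 2 - 1 : ℝ) = -(1 / 2) by norm_num,
      show (3 / 2 : ℝ) = 1 / 2 + 1 by norm_num, rpow_add hs, rpow_one, rpow_neg hs.le]
    congr 1
    field_simp
    rw [hr2]
  rw [setLIntegral_congr_fun measurableSet_Ioi hsplit,
    lintegral_const_mul' _ _ ENNReal.ofReal_ne_top, lintegral_add_left (by fun_prop),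
    setLIntegral_Ioi_rpow_mul_exp_neg_half (by norm_num),
    setLIntegral_Ioi_rpow_mul_exp_neg_half (by norm_num),
    two_rpow_three_halves_mul_Gamma_three_halves, two_rpow_one_half_mul_Gamma_one_half,
    ← ENNReal.ofReal_add (by positivity) (by positivity), ← ENNReal.ofReal_mul (by positivity)]
  congr 1
  ring_nf
  rw [sq_sqrt (by positivity)]
  ring

noncomputable def intercrossingIntegrand (v : EuclideanSpace ℝ (Fin 4)) : ℝ :=
  (‖v‖ ^ 2 * |v 3| / (‖v‖ ^ 2 - (v 2) ^ 2) ^ (3 / 2 : ℝ)) * exp (-‖v‖ ^ 2 / 2)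

theorem measurable_intercrossingIntegrand : Measurable intercrossingIntegrand := by
  unfold intercrossingIntegrand
  fun_prop

theorem intercrossingIntegrand_nonneg (v : EuclideanSpace ℝ (Fin 4)) :
    0 ≤ intercrossingIntegrand v := by
  have : 0 ≤ ‖v‖ ^ 2 - (v 2) ^ 2 := by
    rw [sub_nonneg, ← sq_abs]
    exact pow_le_pow_left₀ (abs_nonneg _) (PiLp.norm_apply_le v 2) 2
  unfold intercrossingIntegrand
  positivity

theorem intercrossingIntegrand_apply (x y c d : ℝ) :
    intercrossingIntegrand !₂[x, y, c, d] =
      |d| * (exp (-(x ^ 2 + y ^ 2 + d ^ 2) / 2) / (x ^ 2 + y ^ 2 + d ^ 2) ^ (3 / 2 : ℝ)) *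
        ((x ^ 2 + y ^ 2 + d ^ 2 + c ^ 2) * exp (-c ^ 2 / 2)) := by
  have hnorm : ‖!₂[x, y, c, d]‖ ^ 2 = x ^ 2 + y ^ 2 + d ^ 2 + c ^ 2 := by
    simp only [EuclideanSpace.norm_sq_eq, norm_eq_abs, sq_abs, Fin.sum_univ_four,
      Matrix.cons_val_zero, Matrix.cons_val_one, Matrix.cons_val]
    ring
  have hc : !₂[x, y, c, d] 2 = c := rfl
  have hd : !₂[x, y, c, d] 3 = d := rfl
  rw [intercrossingIntegrand, hnorm, hc, hd, add_sub_cancel_right,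
    show -(x ^ 2 + y ^ 2 + d ^ 2 + c ^ 2) / 2 = -(x ^ 2 + y ^ 2 + d ^ 2) / 2 + -c ^ 2 / 2 by ring,
    exp_add]
  ring

theorem lintegral_intercrossingIntegrand_fiber (x y d : ℝ) :
    ∫⁻ c, ENNReal.ofReal (intercrossingIntegrand !₂[x, y, c, d]) =
      ENNReal.ofReal |d| * ENNReal.ofReal (radialProfile (x ^ 2 + y ^ 2 + d ^ 2)) := by
  have hA : 0 ≤ |d| * (exp (-(x ^ 2 + y ^ 2 + d ^ 2) / 2) /
      (x ^ 2 + y ^ 2 + d ^ 2) ^ (3 / 2 : ℝ)) := by positivity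
  simp_rw [intercrossingIntegrand_apply, ENNReal.ofReal_mul hA]
  rw [lintegral_const_mul' _ _ ENNReal.ofReal_ne_top,
    lintegral_add_sq_mul_exp_neg_sq_div_two (by positivity), ← ENNReal.ofReal_mul hA,
    ← ENNReal.ofReal_mul (abs_nonneg d), radialProfile]
  ring_nf

theorem lintegral_intercrossingIntegrand :
    ∫⁻ v, ENNReal.ofReal (intercrossingIntegrand v) = ENNReal.ofReal ((2 * π) ^ 2) := by
  simp_rw [lintegral_euclideanSpace_fin_four measurable_intercrossingIntegrand.ennreal_ofReal,
    lintegral_intercrossingIntegrand_fiber]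
  rw [lintegral_lintegral_abs_mul_comp_sq_add_sq_add_sq
      (g := fun s => ENNReal.ofReal (radialProfile s)) (by unfold radialProfile; fun_prop),
    setLIntegral_Ioi_mul_radialProfile, ← ENNReal.ofReal_mul pi_pos.le]
  ring_nf

theorem stmt18 :
    (1 / (2 * Real.pi) ^ 2) *
      ∫ v : EuclideanSpace ℝ (Fin 4),
        (‖v‖ ^ 2 * |v 3| / (‖v‖ ^ 2 - (v 2) ^ 2) ^ ((3:ℝ)/2)) *
          Real.exp (-‖v‖ ^ 2 / 2) = 1 := by
  change 1 / (2 * π) ^ 2 * ∫ v, intercrossingIntegrand v = 1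
  rw [integral_eq_lintegral_of_nonneg_ae (.of_forall intercrossingIntegrand_nonneg)
      measurable_intercrossingIntegrand.aestronglyMeasurable,
    lintegral_intercrossingIntegrand, ENNReal.toReal_ofReal (by positivity)]
  field_simp
end
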